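/- For odd n ≥ 7, let g = [3,2,5,4,7,6,…,n−3,n,n−1,1] ∈ Σ_n and let r_{1,n} be the full reversal. Then the breakpoint distance d_BP(r_{1,n}·g, g) equals n+1, and consequently λ₁(Σ_n, R_n) ≥ (n+1)/2, where R_n is the set of all reversals. -/

import Mathlib

/-
Left multiplication by the full reversal `r_{1,n}` complements values, `v ↦ n + 1 - v`.
For the given `g`, each adjacency `(u, v)` of the extended sequence `[0, g, n + 1]` has the
shape `(even, even + 3)`, `(even + 1, even)`, `(n - 1, 1)` or `(1, n + 1)`, while those of
`r_{1,n} g` have the shape `(odd, odd + 1)`, `(odd + 3, odd)`, `(0, n - 2)`, `(2, n)` or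
`(n, n + 1)`; for `n ≥ 7` no unordered pair occurs in both lists, so all `n + 1` adjacencies
of `r_{1,n} g` are breakpoints. A reversal cuts the sequence in only two places, so it changes
the number of breakpoints by at most two; as reversals generate `Σ_n`, this gives
`d_R(r_{1,n} g, g) ≥ (n + 1) / 2`, a lower bound for `λ₁`.
-/

open scoped Classical

/-- The function `p ↦ a + b − p` on positions `a,…,b` (0-indexed), identity elsewhere. -/
def revFun {n : ℕ} (a b : ℕ) (p : Fin n) : Fin n :=
  if h : a ≤ (p : ℕ) ∧ (p : ℕ) ≤ b ∧ b < n then ⟨a + b - (p : ℕ), by omega⟩ else p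

lemma revFun_involutive {n : ℕ} (a b : ℕ) :
    Function.Involutive (revFun (n := n) a b) := by
  intro p
  unfold revFun
  split_ifs with h1 h2 <;>
    first
      | (apply Fin.ext; simp only []; omega)
      | rfl
      | (exfalso; simp only [] at *; omega)

/-- The reversal `r_{a,b}` of the segment of positions `a,…,b` (0-indexed), as a
permutation of `Fin n`. -/
def rev {n : ℕ} (a b : ℕ) : Equiv.Perm (Fin n) :=
  Function.Involutive.toPerm _ (revFun_involutive a b)

/-- The one-line notation of `h` extended by sentinels: `[0, h(1), …, h(n), n+1]`
(as a function of the position `i ∈ {0,…,n+1}`, with values shifted to be 1-indexed). -/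
def extSeq {n : ℕ} (h : Equiv.Perm (Fin n)) (i : ℕ) : ℕ :=
  if hi : 1 ≤ i ∧ i ≤ n then ((h ⟨i - 1, by omega⟩ : Fin n) : ℕ) + 1
  else if i = 0 then 0 else n + 1

/-- The breakpoint distance `d_BP(g,g')`: the number of adjacent pairs in the extended
list of `g` that are not adjacent (in either order) in the extended list of `g'`. -/
noncomputable def dBP {n : ℕ} (g g' : Equiv.Perm (Fin n)) : ℕ :=
  ((Finset.range (n + 1)).filter (fun i => ¬ ∃ j ≤ n,
      (extSeq g' j = extSeq g i ∧ extSeq g' (j + 1) = extSeq g (i + 1)) ∨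
      (extSeq g' j = extSeq g (i + 1) ∧ extSeq g' (j + 1) = extSeq g i))).card

/-- The set of all reversals in `Σ_n` (of segments with at least two elements). -/
def reversals (n : ℕ) : Set (Equiv.Perm (Fin n)) :=
  {σ | ∃ a b : ℕ, a < b ∧ b < n ∧ σ = rev a b}


/-- `dS S g g'` is the minimum `k` such that `g' = g * s₁ * ⋯ * s_k` with all `sᵢ ∈ S`. -/
noncomputable def dS {G : Type*} [Group G] (S : Set G) (g g' : G) : ℕ :=
  sInf {k | ∃ l : List G, (∀ x ∈ l, x ∈ S) ∧ l.length = k ∧ g * l.prod = g'}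

/-- `λ₁(G,S) = max_{g ∈ G, s ∈ S} d_S(sg, g)`. -/
noncomputable def lam1 {G : Type*} [Group G] (S : Set G) : ℕ :=
  sSup {m | ∃ g : G, ∃ s ∈ S, m = dS S (s * g) g}

open Finset Equiv

lemma val_rev_apply {n : ℕ} (a b : ℕ) (p : Fin n) :
    ((rev a b p : Fin n) : ℕ) =
      if a ≤ (p : ℕ) ∧ (p : ℕ) ≤ b ∧ b < n then a + b - (p : ℕ) else p := by
  change ((revFun a b p : Fin n) : ℕ) = _
  unfold revFun
  split_ifs <;> rfl

lemma swap_castSucc_succ_eq_rev {m : ℕ} (i : Fin m) :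
    swap i.castSucc i.succ = rev (i : ℕ) (i + 1) := by
  ext p
  rw [val_rev_apply, swap_apply_def]
  split_ifs <;> simp only [Fin.ext_iff, Fin.val_castSucc, Fin.val_succ] at * <;> omega

lemma mclosure_reversals (n : ℕ) : Submonoid.closure (reversals n) = ⊤ := by
  cases n with
  | zero => exact Subsingleton.elim _ _
  | succ m =>
    refine top_unique <|
      (Perm.mclosure_swap_castSucc_succ m).symm.le.trans (Submonoid.closure_mono ?_)
    rintro _ ⟨i, rfl⟩
    exact ⟨i, i + 1, by omega, by omega, swap_castSucc_succ_eq_rev i⟩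

/-- `revPos a (b + 1)` is `r_{a,b}` acting on positions of the extended sequence (shifted by one
for the sentinel `0`), and `revPos a b` is where it moves the adjacency at position `i`. -/
def revPos (a b i : ℕ) : ℕ :=
  if a + 1 ≤ i ∧ i ≤ b then a + b + 1 - i else i

lemma revPos_injective (a b : ℕ) : Function.Injective (revPos a b) := by
  intro i j hij
  unfold revPos at hij
  split_ifs at hij <;> omega

lemma extSeq_mul_rev {n : ℕ} (h : Perm (Fin n)) {a b : ℕ} (hbn : b < n) (i : ℕ) :
    extSeq (h * rev a b) i = extSeq h (revPos a (b + 1) i) := by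
  by_cases hi : 1 ≤ i ∧ i ≤ n
  · have hi' : 1 ≤ revPos a (b + 1) i ∧ revPos a (b + 1) i ≤ n := by
      unfold revPos; split_ifs <;> omega
    have hrev :
        rev a b (⟨i - 1, by omega⟩ : Fin n) = ⟨revPos a (b + 1) i - 1, by omega⟩ := by
      ext
      rw [val_rev_apply]
      unfold revPos
      split_ifs <;> simp only at * <;> omega
    unfold extSeq
    rw [dif_pos hi, dif_pos hi', Perm.mul_apply, hrev]
  · have hfix : revPos a (b + 1) i = i := by
      unfold revPos; split_ifs <;> omega
    rw [hfix]
    unfold extSeq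
    rw [dif_neg hi, dif_neg hi]

def AdjacentIn {n : ℕ} (g : Perm (Fin n)) (x y : ℕ) : Prop :=
  ∃ j ≤ n, (extSeq g j = x ∧ extSeq g (j + 1) = y) ∨
    (extSeq g j = y ∧ extSeq g (j + 1) = x)

lemma AdjacentIn.symm {n : ℕ} {g : Perm (Fin n)} {x y : ℕ} (hxy : AdjacentIn g x y) :
    AdjacentIn g y x :=
  let ⟨j, hj, hc⟩ := hxy
  ⟨j, hj, hc.symm⟩

lemma dBP_eq_card_filter {n : ℕ} (h g : Perm (Fin n)) :
    dBP h g = #{i ∈ range (n + 1) | ¬ AdjacentIn g (extSeq h i) (extSeq h (i + 1))} := by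
  unfold dBP AdjacentIn
  congr

lemma dBP_self {n : ℕ} (g : Perm (Fin n)) : dBP g g = 0 := by
  rw [dBP_eq_card_filter, card_eq_zero, filter_eq_empty_iff]
  intro i hi
  exact not_not.mpr ⟨i, Nat.lt_succ_iff.mp (mem_range.mp hi), Or.inl ⟨rfl, rfl⟩⟩

lemma extSeq_mul_rev_revPos {n : ℕ} (h : Perm (Fin n)) {a b : ℕ} (hbn : b < n) {i : ℕ}
    (hia : i ≠ a) (hib : i ≠ b + 1) :
    (extSeq (h * rev a b) (revPos a b i) = extSeq h i ∧
        extSeq (h * rev a b) (revPos a b i + 1) = extSeq h (i + 1)) ∨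
      (extSeq (h * rev a b) (revPos a b i) = extSeq h (i + 1) ∧
        extSeq (h * rev a b) (revPos a b i + 1) = extSeq h i) := by
  simp only [extSeq_mul_rev h hbn]
  unfold revPos
  by_cases hmid : a + 1 ≤ i ∧ i ≤ b
  · right
    simp only [if_pos hmid]
    constructor <;> congr 1 <;> split_ifs <;> omega
  · left
    simp only [if_neg hmid]
    constructor <;> congr 1 <;> split_ifs <;> omega

lemma dBP_le_dBP_mul_rev_add_two {n : ℕ} (h g : Perm (Fin n)) (a b : ℕ) (hbn : b < n) :
    dBP h g ≤ dBP (h * rev a b) g + 2 := by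
  rw [dBP_eq_card_filter, dBP_eq_card_filter]
  set B := {i ∈ range (n + 1) | ¬ AdjacentIn g (extSeq h i) (extSeq h (i + 1))}
  set B' := {i ∈ range (n + 1) |
    ¬ AdjacentIn g (extSeq (h * rev a b) i) (extSeq (h * rev a b) (i + 1))}
  have hmaps : ∀ i ∈ B \ {a, b + 1}, revPos a b i ∈ B' := by
    intro i hi
    simp only [B, B', mem_sdiff, mem_filter, mem_range, mem_insert, mem_singleton,
      not_or] at hi ⊢
    obtain ⟨⟨hin, hbreak⟩, hia, hib⟩ := hi
    refine ⟨by unfold revPos; split_ifs <;> omega, fun hadj => hbreak ?_⟩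
    rcases extSeq_mul_rev_revPos h hbn hia hib with ⟨e₁, e₂⟩ | ⟨e₁, e₂⟩
    · rwa [e₁, e₂] at hadj
    · rw [e₁, e₂] at hadj
      exact hadj.symm
  calc #B ≤ #(B \ {a, b + 1}) + #{a, b + 1} := card_le_card_sdiff_add_card
    _ ≤ #B' + 2 :=
      add_le_add (card_le_card_of_injOn _ hmaps (revPos_injective a b).injOn) card_le_two

lemma dBP_le_dBP_mul_prod_add_two_mul_length {n : ℕ} (g : Perm (Fin n))
    (l : List (Perm (Fin n))) (hl : ∀ r ∈ l, r ∈ reversals n) (h : Perm (Fin n)) :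
    dBP h g ≤ dBP (h * l.prod) g + 2 * l.length := by
  induction l generalizing h with
  | nil => simp
  | cons r t ih =>
    obtain ⟨a, b, -, hbn, rfl⟩ := hl r List.mem_cons_self
    have ht := ih (fun x hx => hl x (List.mem_cons_of_mem _ hx)) (h * rev a b)
    rw [mul_assoc, ← List.prod_cons] at ht
    have := dBP_le_dBP_mul_rev_add_two h g a b hbn
    simp only [List.length_cons]
    omega

lemma dBP_le_two_mul_dS {n : ℕ} (h g : Perm (Fin n)) : dBP h g ≤ 2 * dS (reversals n) h g := by
  have hne : {k | ∃ l : List (Perm (Fin n)), (∀ x ∈ l, x ∈ reversals n) ∧ l.length = k ∧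
      h * l.prod = g}.Nonempty := by
    have hmem : h⁻¹ * g ∈ Submonoid.closure (reversals n) := by
      rw [mclosure_reversals]; trivial
    obtain ⟨l, hl, hprod⟩ := Submonoid.exists_list_of_mem_closure hmem
    exact ⟨l.length, l, hl, rfl, by rw [hprod, mul_inv_cancel_left]⟩
  obtain ⟨l, hl, hlen, hprod⟩ := Nat.sInf_mem hne
  have := dBP_le_dBP_mul_prod_add_two_mul_length g l hl h
  rwa [hprod, dBP_self, zero_add, hlen] at this

lemma dS_le_lam1 {G : Type*} [Group G] [Finite G] {S : Set G} {s : G} (hs : s ∈ S) (g : G) :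
    dS S (s * g) g ≤ lam1 S := by
  have hbdd : BddAbove {m | ∃ g : G, ∃ s ∈ S, m = dS S (s * g) g} :=
    ((Set.finite_range fun p : G × G => dS S (p.2 * p.1) p.1).subset
      (by rintro m ⟨g, s, -, rfl⟩; exact ⟨(g, s), rfl⟩)).bddAbove
  exact le_csSup hbdd ⟨g, s, hs, rfl⟩

lemma extSeq_rev_mul {n : ℕ} (h : Perm (Fin n)) {i : ℕ} (hi : 1 ≤ i ∧ i ≤ n) :
    extSeq (rev 0 (n - 1) * h) i = n + 1 - extSeq h i := by
  unfold extSeq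
  rw [dif_pos hi, dif_pos hi, Perm.mul_apply, val_rev_apply,
    if_pos ⟨Nat.zero_le _, by omega, by omega⟩]
  omega

/-- `g = [3, 2, 5, 4, …, n, n - 1, 1]` in one-line notation, written 0-indexed. -/
def IsZigzagPerm {n : ℕ} (g : Perm (Fin n)) : Prop :=
  ∀ p : Fin n, (g p : ℕ) =
    if (p : ℕ) = n - 1 then 0 else if (p : ℕ) % 2 = 0 then (p : ℕ) + 2 else (p : ℕ)

lemma IsZigzagPerm.extSeq_eq {n : ℕ} {g : Perm (Fin n)} (hg : IsZigzagPerm g) {i : ℕ}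
    (hi : i ≤ n + 1) :
    extSeq g i = if i = 0 then 0 else if i = n + 1 then n + 1 else if i = n then 1
      else if i % 2 = 1 then i + 2 else i := by
  unfold extSeq
  by_cases h1 : 1 ≤ i ∧ i ≤ n
  · rw [dif_pos h1, hg]
    simp only
    split_ifs <;> omega
  · rw [dif_neg h1]
    split_ifs <;> omega

lemma IsZigzagPerm.extSeq_rev_mul_eq {n : ℕ} {g : Perm (Fin n)} (hg : IsZigzagPerm g) {i : ℕ}
    (hi : i ≤ n + 1) :
    extSeq (rev 0 (n - 1) * g) i = if i = 0 then 0 else if i = n + 1 then n + 1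
      else if i = n then n else if i % 2 = 1 then n - 1 - i else n + 1 - i := by
  by_cases h1 : 1 ≤ i ∧ i ≤ n
  · rw [extSeq_rev_mul g h1, hg.extSeq_eq hi]
    split_ifs <;> omega
  · unfold extSeq
    rw [dif_neg h1]
    split_ifs <;> omega

lemma IsZigzagPerm.extSeq_succ_cases {n : ℕ} {g : Perm (Fin n)} (hg : IsZigzagPerm g)
    (hodd : n % 2 = 1) {j : ℕ} (hj : j ≤ n) :
    (extSeq g j % 2 = 0 ∧ extSeq g (j + 1) = extSeq g j + 3) ∨
      (extSeq g (j + 1) % 2 = 0 ∧ extSeq g j = extSeq g (j + 1) + 1) ∨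
      (extSeq g j = n - 1 ∧ extSeq g (j + 1) = 1) ∨
      (extSeq g j = 1 ∧ extSeq g (j + 1) = n + 1) := by
  rw [hg.extSeq_eq (by omega), hg.extSeq_eq (by omega)]
  split_ifs <;> lia

lemma IsZigzagPerm.extSeq_rev_mul_succ_cases {n : ℕ} {g : Perm (Fin n)} (hg : IsZigzagPerm g)
    (hn : 3 ≤ n) (hodd : n % 2 = 1) {i : ℕ} (hi : i ≤ n) :
    (extSeq (rev 0 (n - 1) * g) i % 2 = 1 ∧
        extSeq (rev 0 (n - 1) * g) (i + 1) = extSeq (rev 0 (n - 1) * g) i + 1) ∨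
      (extSeq (rev 0 (n - 1) * g) (i + 1) % 2 = 1 ∧
        extSeq (rev 0 (n - 1) * g) i = extSeq (rev 0 (n - 1) * g) (i + 1) + 3) ∨
      (extSeq (rev 0 (n - 1) * g) i = 0 ∧ extSeq (rev 0 (n - 1) * g) (i + 1) = n - 2) ∨
      (extSeq (rev 0 (n - 1) * g) i = 2 ∧ extSeq (rev 0 (n - 1) * g) (i + 1) = n) ∨
      (extSeq (rev 0 (n - 1) * g) i = n ∧ extSeq (rev 0 (n - 1) * g) (i + 1) = n + 1) := by
  rw [hg.extSeq_rev_mul_eq (by omega), hg.extSeq_rev_mul_eq (by omega)]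
  split_ifs <;> lia

lemma IsZigzagPerm.dBP_rev_mul_eq {n : ℕ} {g : Perm (Fin n)} (hg : IsZigzagPerm g)
    (hn : 7 ≤ n) (hodd : n % 2 = 1) :
    dBP (rev 0 (n - 1) * g) g = n + 1 := by
  rw [dBP_eq_card_filter, filter_true_of_mem, card_range]
  rintro i hi ⟨j, hj, hc⟩
  have hgj := hg.extSeq_succ_cases hodd hj
  have hhi := hg.extSeq_rev_mul_succ_cases (by omega) hodd (Nat.lt_succ_iff.mp (mem_range.mp hi))
  omega

/-- for odd `n ≥ 7` and `g = [3,2,5,4,7,6,…,n,n−1,1] ∈ Σ_n` (in one-line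
notation; here 0-indexed), the breakpoint distance between `r_{1,n}·g` and `g` is `n+1`,
and consequently `λ₁(Σ_n, R_n) ≥ (n+1)/2`. -/
theorem stmt_16 (n : ℕ) (hn : 7 ≤ n) (hodd : Odd n)
    (g : Equiv.Perm (Fin n))
    (hg : ∀ p : Fin n, (g p : ℕ) =
      if (p : ℕ) = n - 1 then 0
      else if (p : ℕ) % 2 = 0 then (p : ℕ) + 2 else (p : ℕ)) :
    dBP (rev 0 (n - 1) * g) g = n + 1 ∧ (n + 1) / 2 ≤ lam1 (reversals n) := by
  have hzig : IsZigzagPerm g := hg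
  have hbp := hzig.dBP_rev_mul_eq hn (Nat.odd_iff.mp hodd)
  have hrev : rev 0 (n - 1) ∈ reversals n := ⟨0, n - 1, by omega, by omega, rfl⟩
  refine ⟨hbp, ?_⟩
  calc (n + 1) / 2 ≤ dS (reversals n) (rev 0 (n - 1) * g) g := by
        have := dBP_le_two_mul_dS (rev 0 (n - 1) * g) g
        omega
    _ ≤ lam1 (reversals n) := dS_le_lam1 hrev g
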